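/- arXiv:2112.13962 — 2 statements merged into one kernel-verified Lean document; each statement's English description precedes it below -/
import Mathlib

section
/- The operators S_{12}, S_{13}, S_{21}, S_{23} on L²(ℝ⁶) defined by (S_{ij} f)(…, t_i, s_i, …, t_j, s_j, …) = f with substitutions s_i ↦ s_i + s_j and t_j ↦ t_j − t_i (coordinates ordered (t₁,s₁,t₂,s₂,t₃,s₃)) satisfy the pentagon-type relation S_{13} S_{21} = S_{21} S_{23} S_{13}. -/
/-!
Each `S_{ij}` is the pullback of functions along a map that acts separately on the `t`- and
`s`-coordinates, by the transvections `t_j ↦ t_j − t_i` and `s_i ↦ s_i + s_j`. Pullback reverses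
the order of composition, so the relation splits into one identity between three transvections
of the `t`-variables and one of the `s`-variables; both are commutator relations between
elementary transvections and hold over any abelian group for distinct indices.
-/

/-- The operator `S_{ij}` on functions of `(t₁,s₁,t₂,s₂,t₃,s₃) ∈ ℝ⁶` (here recorded as a
pair of coordinate functions `t s : Fin 3 → ℝ`), acting by the substitutions
`s_i ↦ s_i + s_j` and `t_j ↦ t_j − t_i`. -/
def Ssub (i j : Fin 3) (f : (Fin 3 → ℝ) → (Fin 3 → ℝ) → ℂ) :
    (Fin 3 → ℝ) → (Fin 3 → ℝ) → ℂ :=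
  fun t s => f (Function.update t j (t j - t i)) (Function.update s i (s i + s j))

section Transvection

variable {ι G : Type*} [DecidableEq ι] [AddCommGroup G]

def shearT (i j : ι) (t : ι → G) : ι → G := Function.update t j (t j - t i)

def shearS (i j : ι) (s : ι → G) : ι → G := Function.update s i (s i + s j)

variable {a b c : ι}

theorem shearT_pentagon (hab : a ≠ b) (hac : a ≠ c) (hbc : b ≠ c) (t : ι → G) :
    shearT b a (shearT a c t) = shearT a c (shearT b c (shearT b a t)) := by
  ext k
  simp only [shearT, Function.update_apply]
  grind

theorem shearS_pentagon (hbc : b ≠ c) (s : ι → G) :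
    shearS b a (shearS a c s) = shearS a c (shearS b c (shearS b a s)) := by
  ext k
  simp only [shearS, Function.update_apply]
  grind

end Transvection

theorem Ssub_eq (i j : Fin 3) (f : (Fin 3 → ℝ) → (Fin 3 → ℝ) → ℂ) :
    Ssub i j f = fun t s => f (shearT i j t) (shearS i j s) :=
  rfl

/-- Indices `1,2,3` of the paper are `0,1,2 : Fin 3`. -/
theorem Ssub_pentagon (f : (Fin 3 → ℝ) → (Fin 3 → ℝ) → ℂ) :
    Ssub 0 2 (Ssub 1 0 f) = Ssub 1 0 (Ssub 1 2 (Ssub 0 2 f)) := by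
  funext t s
  simp only [Ssub_eq]
  rw [shearT_pentagon (by decide) (by decide) (by decide), shearS_pentagon (by decide)]
end

section
/- The formal computation A³ = −c³ · id: if A = c · S_m ∘ e^{−q_s + ħ⁻¹ p_t} with m = ((-1,-1),(1,0)), then using S_m conjugation relations and the central-commutator BCH identity, the product of the three exponential factors e^{q_t + ħ⁻¹ p_s} · e^{−q_t + q_s + ħ⁻¹(−p_t − p_s)} · e^{−q_s + ħ⁻¹ p_t} equals e^{πi} · id = −id, whence A³ = −c³ · id. -/
/-!
Write `a = q_t + ħ⁻¹p_s`, `b = −q_t + q_s − ħ⁻¹(p_t + p_s)` and `e = −q_s + ħ⁻¹p_t`.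
Conjugation by `S_m` permutes `e ↦ a ↦ b ↦ e`, so `S_m e^e = e^a S_m` etc., and together with
`S_m³ = 1` this gives `(S_m e^e)³ = e^a e^b e^e`. The commutator `[a, b] = 2πi` is central, so BCH
gives `e^a e^b = e^{πi} e^{a+b}`, and `a + b = −e` makes the product `e^{πi} = −1`.
-/

section CentralBCH

variable {A : Type*} [Ring A] [Algebra ℂ A] {E : A → A}

theorem mul_eq_exp_half_smul_of_commutator_eq_algebraMap
    (hBCH : ∀ a b : A, Commute (a * b - b * a) a → Commute (a * b - b * a) b →
      E a * E b = E (a + b + ((1 : ℂ) / 2) • (a * b - b * a)))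
    (hshift : ∀ a : A, ∀ z : ℂ, E (a + algebraMap ℂ A z) = Complex.exp z • E a)
    {a b : A} {z : ℂ} (h : a * b - b * a = algebraMap ℂ A z) :
    E a * E b = Complex.exp (z / 2) • E (a + b) := by
  rw [hBCH a b (h ▸ Algebra.commutes z a) (h ▸ Algebra.commutes z b), h, Algebra.smul_def,
    ← map_mul, one_div_mul_eq_div, hshift]

theorem neg_mul_self_eq_one
    (hBCH : ∀ a b : A, Commute (a * b - b * a) a → Commute (a * b - b * a) b →
      E a * E b = E (a + b + ((1 : ℂ) / 2) • (a * b - b * a)))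
    (hshift : ∀ a : A, ∀ z : ℂ, E (a + algebraMap ℂ A z) = Complex.exp z • E a)
    (hE0 : E 0 = 1) (b : A) : E (-b) * E b = 1 := by
  rw [mul_eq_exp_half_smul_of_commutator_eq_algebraMap hBCH hshift (z := 0)
    (by rw [map_zero]; noncomm_ring), neg_add_cancel, hE0, zero_div, Complex.exp_zero, one_smul]

end CentralBCH

theorem Units.mul_eq_mul_of_conj_eq {M : Type*} [Monoid M] (u : Mˣ) {a b : M}
    (h : u * a * ↑u⁻¹ = b) : u * a = b * u :=
  (Units.mul_inv_eq_iff_eq_mul u).1 h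

theorem mul_pow_three_of_cyclic {M : Type*} [Monoid M] {t x y z : M} (ht : t ^ 3 = 1)
    (hx : t * x = y * t) (hy : t * y = z * t) (hz : t * z = x * t) :
    (t * z) ^ 3 = x * y * z := by
  calc (t * z) ^ 3 = x * (t * x) * (t * x) * t := by rw [hz, pow_three]; simp only [mul_assoc]
    _ = x * y * (t * y) * (t * t) := by rw [hx]; simp only [mul_assoc]
    _ = x * y * z * t ^ 3 := by rw [hy, pow_three]; simp only [mul_assoc]
    _ = x * y * z := by rw [ht, mul_one]

section Heisenberg

attribute [local instance] LieRing.ofAssociativeRing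

variable {A : Type*} [Ring A] [Algebra ℂ A] {qt qs pt ps : A}

theorem commutator_cyclic_exponents {z : ℂ} (u : ℂ)
    (h1 : pt * qt - qt * pt = algebraMap ℂ A z)
    (h2 : ps * qs - qs * ps = algebraMap ℂ A z)
    (h4 : ps * qt = qt * ps) (h5 : pt * ps = ps * pt) (h6 : qt * qs = qs * qt) :
    (qt + u • ps) * (-qt + qs + u • (-pt - ps)) - (-qt + qs + u • (-pt - ps)) * (qt + u • ps) =
      algebraMap ℂ A (2 * (u * z)) := by
  rw [← Ring.lie_def]
  have qt_qs : ⁅qt, qs⁆ = 0 := by rw [Ring.lie_def, h6, sub_self]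
  have qt_pt : ⁅qt, pt⁆ = -algebraMap ℂ A z := by rw [Ring.lie_def, ← h1, neg_sub]
  have qt_ps : ⁅qt, ps⁆ = 0 := by rw [Ring.lie_def, h4, sub_self]
  have ps_qt : ⁅ps, qt⁆ = 0 := by rw [Ring.lie_def, h4, sub_self]
  have ps_qs : ⁅ps, qs⁆ = algebraMap ℂ A z := by rw [Ring.lie_def, h2]
  have ps_pt : ⁅ps, pt⁆ = 0 := by rw [Ring.lie_def, h5, sub_self]
  simp only [lie_add, add_lie, lie_neg, lie_sub, lie_smul, smul_lie, lie_self,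
    qt_qs, qt_pt, qt_ps, ps_qt, ps_qs, ps_pt]
  rw [two_mul, map_add, map_mul, ← Algebra.smul_def]
  module

theorem cyclic_exponents_of_conj {σ : A →ₗ[ℂ] A} (hqt : σ qt = -qt + qs) (hqs : σ qs = -qt)
    (hpt : σ pt = ps) (hps : σ ps = -pt - ps) (u : ℂ) :
    σ (-qs + u • pt) = qt + u • ps ∧ σ (qt + u • ps) = -qt + qs + u • (-pt - ps) ∧
      σ (-qt + qs + u • (-pt - ps)) = -qs + u • pt := by
  simp only [map_add, map_neg, map_sub, map_smul, hqt, hqs, hpt, hps]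
  refine ⟨?_, trivial, ?_⟩ <;> module

end Heisenberg

theorem formal_A_cubed_general
    (A : Type*) [Ring A] [Algebra ℂ A]
    (hbar : ℝ) (hpos : 0 < hbar) (c : ℂ)
    (E : A → A)
    -- truncated BCH identity for central commutators
    (hBCH : ∀ a b : A, Commute (a * b - b * a) a → Commute (a * b - b * a) b →
      E a * E b = E (a + b + ((1 : ℂ) / 2) • (a * b - b * a)))
    -- exponentials of central scalars factor out as scalar exponentials
    (hshift : ∀ a : A, ∀ z : ℂ, E (a + algebraMap ℂ A z) = Complex.exp z • E a)
    (hE0 : E 0 = 1)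
    -- Heisenberg relations
    (qt qs pt ps : A)
    (h1 : pt * qt - qt * pt = algebraMap ℂ A (Real.pi * Complex.I * hbar))
    (h2 : ps * qs - qs * ps = algebraMap ℂ A (Real.pi * Complex.I * hbar))
    (h4 : ps * qt = qt * ps)
    (h5 : pt * ps = ps * pt) (h6 : qt * qs = qs * qt)
    -- the special linear operator S_m, of order three, with its conjugation rules
    (Sm : Aˣ) (hS3 : Sm ^ 3 = 1)
    (hSqt : (Sm : A) * qt * (↑Sm⁻¹ : A) = -qt + qs)
    (hSqs : (Sm : A) * qs * (↑Sm⁻¹ : A) = -qt)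
    (hSpt : (Sm : A) * pt * (↑Sm⁻¹ : A) = ps)
    (hSps : (Sm : A) * ps * (↑Sm⁻¹ : A) = -pt - ps)
    -- S_m conjugation commutes with E (conjugation by a unitary commutes with
    -- functional calculus)
    (hSE : ∀ a : A, (Sm : A) * E a * (↑Sm⁻¹ : A)
      = E ((Sm : A) * a * (↑Sm⁻¹ : A))) :
    -- the three-exponential identity
    (E (qt + ((hbar⁻¹ : ℝ) : ℂ) • ps) *
       E (-qt + qs + ((hbar⁻¹ : ℝ) : ℂ) • (-pt - ps)) *
       E (-qs + ((hbar⁻¹ : ℝ) : ℂ) • pt)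
      = algebraMap ℂ A (Complex.exp (Real.pi * Complex.I))) ∧
    (algebraMap ℂ A (Complex.exp (Real.pi * Complex.I)) = (-1 : A)) ∧
    -- hence A³ = −c³·id
    ((c • ((Sm : A) * E (-qs + ((hbar⁻¹ : ℝ) : ℂ) • pt))) ^ 3
      = -(c ^ 3) • (1 : A)) := by
  set u : ℂ := ((hbar⁻¹ : ℝ) : ℂ)
  have hu : u * (Real.pi * Complex.I * hbar) = Real.pi * Complex.I := by
    have : (hbar : ℂ) ≠ 0 := mod_cast hpos.ne'
    simp only [u, Complex.ofReal_inv]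
    field_simp
  have hcomm := commutator_cyclic_exponents u h1 h2 h4 h5 h6
  rw [hu] at hcomm
  have hsum : qt + u • ps + (-qt + qs + u • (-pt - ps)) = -(-qs + u • pt) := by module
  have hprod : E (qt + u • ps) * E (-qt + qs + u • (-pt - ps)) * E (-qs + u • pt)
      = algebraMap ℂ A (Complex.exp (Real.pi * Complex.I)) := by
    rw [mul_eq_exp_half_smul_of_commutator_eq_algebraMap hBCH hshift hcomm, hsum,
      smul_mul_assoc, neg_mul_self_eq_one hBCH hshift hE0, mul_div_cancel_left₀ _ two_ne_zero,
      Algebra.algebraMap_eq_smul_one]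
  have hneg : algebraMap ℂ A (Complex.exp (Real.pi * Complex.I)) = -1 := by
    rw [Complex.exp_pi_mul_I, map_neg, map_one]
  refine ⟨hprod, hneg, ?_⟩
  obtain ⟨he, ha, hb⟩ := cyclic_exponents_of_conj
    (σ := LinearMap.mulLeftRight ℂ ((Sm : A), (↑Sm⁻¹ : A))) hSqt hSqs hSpt hSps u
  have hT3 : (Sm : A) ^ 3 = 1 := by rw [← Units.val_pow_eq_pow_val, hS3, Units.val_one]
  rw [smul_pow, mul_pow_three_of_cyclic hT3
    (Sm.mul_eq_mul_of_conj_eq ((hSE _).trans (congrArg E ha)))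
    (Sm.mul_eq_mul_of_conj_eq ((hSE _).trans (congrArg E hb)))
    (Sm.mul_eq_mul_of_conj_eq ((hSE _).trans (congrArg E he))), hprod, hneg, smul_neg, neg_smul]

/-- The formal computation `A³ = −c³·id`: with `A = c·S_m ∘ e^{−q_s + ħ⁻¹p_t}`,
`m = ((-1,-1),(1,0))`, using the `S_m`-conjugation relations and the
central-commutator BCH identity, the product of the three exponential factors
`e^{q_t + ħ⁻¹p_s} · e^{−q_t+q_s+ħ⁻¹(−p_t−p_s)} · e^{−q_s+ħ⁻¹p_t}` equals
`e^{πi}·id = −id`, whence `A³ = −c³·id`. -/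
theorem formal_A_cubed
    (A : Type*) [Ring A] [Algebra ℂ A]
    (hbar : ℝ) (hpos : 0 < hbar) (c : ℂ)
    (E : A → A)
    -- truncated BCH identity for central commutators
    (hBCH : ∀ a b : A, Commute (a * b - b * a) a → Commute (a * b - b * a) b →
      E a * E b = E (a + b + ((1 : ℂ) / 2) • (a * b - b * a)))
    -- exponentials of central scalars factor out as scalar exponentials
    (hshift : ∀ a : A, ∀ z : ℂ, E (a + algebraMap ℂ A z) = Complex.exp z • E a)
    (hE0 : E 0 = 1)
    -- Heisenberg relations
    (qt qs pt ps : A)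
    (h1 : pt * qt - qt * pt = algebraMap ℂ A (Real.pi * Complex.I * hbar))
    (h2 : ps * qs - qs * ps = algebraMap ℂ A (Real.pi * Complex.I * hbar))
    (h3 : pt * qs = qs * pt) (h4 : ps * qt = qt * ps)
    (h5 : pt * ps = ps * pt) (h6 : qt * qs = qs * qt)
    -- the special linear operator S_m, of order three, with its conjugation rules
    (Sm : Aˣ) (hS3 : Sm ^ 3 = 1)
    (hSqt : (Sm : A) * qt * (↑Sm⁻¹ : A) = -qt + qs)
    (hSqs : (Sm : A) * qs * (↑Sm⁻¹ : A) = -qt)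
    (hSpt : (Sm : A) * pt * (↑Sm⁻¹ : A) = ps)
    (hSps : (Sm : A) * ps * (↑Sm⁻¹ : A) = -pt - ps)
    -- S_m conjugation commutes with E (conjugation by a unitary commutes with
    -- functional calculus)
    (hSE : ∀ a : A, (Sm : A) * E a * (↑Sm⁻¹ : A)
      = E ((Sm : A) * a * (↑Sm⁻¹ : A))) :
    -- the three-exponential identity
    (E (qt + ((hbar⁻¹ : ℝ) : ℂ) • ps) *
       E (-qt + qs + ((hbar⁻¹ : ℝ) : ℂ) • (-pt - ps)) *
       E (-qs + ((hbar⁻¹ : ℝ) : ℂ) • pt)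
      = algebraMap ℂ A (Complex.exp (Real.pi * Complex.I))) ∧
    (algebraMap ℂ A (Complex.exp (Real.pi * Complex.I)) = (-1 : A)) ∧
    -- hence A³ = −c³·id
    ((c • ((Sm : A) * E (-qs + ((hbar⁻¹ : ℝ) : ℂ) • pt))) ^ 3
      = -(c ^ 3) • (1 : A)) :=
  formal_A_cubed_general A hbar hpos c E hBCH hshift hE0 qt qs pt ps h1 h2 h4 h5 h6 Sm hS3 hSqt hSqs
    hSpt hSps hSE
end
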